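/- Let e_0 > 0 and 0 < δ < 1, and let G be a graph such that for every vertex subset U with e_G(U) > e_0, the induced subgraph G[U] is not a δ-expander (i.e., h_{G[U]} < δ). Then there exists a partition 𝒜 of V(G) such that (a) every part A satisfies e_G(A) ≤ max{e(G)/2, e_0}, and (b) the number of edges between distinct parts of 𝒜 is at most (δ/(1+δ))·((3+δ)/2)·e(G). -/

import Mathlib

/-
Split recursively: as long as a part `A` has more than `M = max{e(G)/2, e₀}` internal edges,
`G[A]` is not a `δ`-expander, so `A = S ⊔ T` with `e(S,T) ≤ δ · min(vol S, vol T)`, volumes taken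
in `G[A]`. By strong induction, the edges cut inside a set with `m` internal edges number at most
`φ(m) = cutBudget δ M m`; the induction step is `e(S,T) + φ(e(S)) + φ(e(T)) ≤ φ(e(A))`, which
needs `δ ≤ 1` and uses that the smaller side has at most `M` internal edges since
`e(A) ≤ e(G) ≤ 2M`. Finally `φ(e(G)) ≤ (δ/(1+δ))·((3+δ)/2)·e(G)`, again because `e(G) ≤ 2M`.
-/

open Finset
open scoped Classical

noncomputable section

variable {V : Type*} [Fintype V]

/-- Number of edges between `A` and `B` (each cross edge counted once when `A`,`B` disjoint). -/
def ecut (G : SimpleGraph V) (A B : Finset V) : ℝ :=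
  ((A ×ˢ B).filter fun p => G.Adj p.1 p.2).card

/-- Number of edges inside `A`. -/
def ein (G : SimpleGraph V) (A : Finset V) : ℝ := ecut G A A / 2

/-- Volume of a vertex set: sum of degrees. -/
def gvol (G : SimpleGraph V) (A : Finset V) : ℝ := ∑ v ∈ A, (G.degree v : ℝ)

/-- Number of edges of `G`. -/
def edgecount (G : SimpleGraph V) : ℝ := (G.edgeFinset.card : ℝ)

/-- Conductance (Cheeger constant) `h_G`. -/
def conduct (G : SimpleGraph V) : ℝ :=
  sInf { x | ∃ A : Finset V, A.Nonempty ∧ A ≠ univ ∧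
    x = ecut G A Aᶜ / min (gvol G A) (gvol G Aᶜ) }

/-- Expansion-by-products `ĥ_G`. -/
def hhat (G : SimpleGraph V) : ℝ :=
  sInf { x | ∃ A : Finset V, A.Nonempty ∧ A ≠ univ ∧
    x = ecut G A Aᶜ * gvol G univ / (gvol G A * gvol G Aᶜ) }

/-- Modularity score of a vertex partition. -/
def modScore (G : SimpleGraph V) (P : Finpartition (univ : Finset V)) : ℝ :=
  (∑ A ∈ P.parts, ein G A) / edgecount G
    - (∑ A ∈ P.parts, (gvol G A) ^ 2) / (4 * (edgecount G) ^ 2)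

/-- Modularity `q*(G)`: maximum modularity score over vertex partitions. -/
def modularity (G : SimpleGraph V) : ℝ :=
  sSup { x | ∃ P : Finpartition (univ : Finset V), x = modScore G P }


namespace Finpartition

variable {α : Type*} [DecidableEq α] {s t : Finset α}

def disjUnion (P : Finpartition s) (Q : Finpartition t) (h : Disjoint s t) :
    Finpartition (s ∪ t) where
  parts := P.parts ∪ Q.parts
  supIndep := by
    rw [Finset.supIndep_iff_pairwiseDisjoint, coe_union]
    exact P.disjoint.union Q.disjoint fun B hB C hC _ => h.mono (P.le hB) (Q.le hC)
  sup_parts := by rw [sup_union, P.sup_parts, Q.sup_parts]; rfl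
  bot_notMem := by rw [mem_union, not_or]; exact ⟨P.bot_notMem, Q.bot_notMem⟩

lemma sum_disjUnion_parts {β : Type*} [AddCommMonoid β] (P : Finpartition s) (Q : Finpartition t)
    (h : Disjoint s t) (f : Finset α → β) :
    ∑ B ∈ (P.disjUnion Q h).parts, f B = ∑ B ∈ P.parts, f B + ∑ B ∈ Q.parts, f B := by
  refine sum_union (disjoint_left.mpr fun B hP hQ => ?_)
  obtain ⟨x, hx⟩ := P.nonempty_of_mem_parts hP
  exact disjoint_left.mp h (P.le hP hx) (Q.le hQ hx)

lemma sum_top_parts {β : Type*} [AddCommMonoid β] (f : Finset α → β) (hf : f ∅ = 0) :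
    ∑ B ∈ (⊤ : Finpartition s).parts, f B = f s := by
  rcases subset_singleton_iff.mp (parts_top_subset s) with h | h
  · rw [h, parts_eq_empty_iff.mp h, sum_empty]; exact hf.symm
  · rw [h, sum_singleton]

end Finpartition

section EdgeCounts

variable {V : Type*} (G : SimpleGraph V)

lemma ecut_eq_sum (A B : Finset V) :
    ecut G A B = ∑ a ∈ A, ∑ b ∈ B, if G.Adj a b then (1 : ℝ) else 0 := by
  rw [ecut, card_filter, Nat.cast_sum, sum_product]
  push_cast
  rfl

lemma ecut_nonneg (A B : Finset V) : 0 ≤ ecut G A B := Nat.cast_nonneg _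

lemma ecut_comm (A B : Finset V) : ecut G A B = ecut G B A := by
  rw [ecut_eq_sum, ecut_eq_sum, sum_comm]
  simp only [G.adj_comm]

lemma ecut_mono {A A' B B' : Finset V} (hA : A ⊆ A') (hB : B ⊆ B') :
    ecut G A B ≤ ecut G A' B' :=
  Nat.cast_le.mpr (card_le_card (G.interedges_mono hA hB))

lemma ecut_union_left {S T : Finset V} (h : Disjoint S T) (B : Finset V) :
    ecut G (S ∪ T) B = ecut G S B + ecut G T B := by
  simp only [ecut_eq_sum, sum_union h]

lemma ecut_union_right (A : Finset V) {S T : Finset V} (h : Disjoint S T) :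
    ecut G A (S ∪ T) = ecut G A S + ecut G A T := by
  rw [ecut_comm, ecut_union_left G h, ecut_comm G S, ecut_comm G T]

lemma ein_nonneg (A : Finset V) : 0 ≤ ein G A := div_nonneg (ecut_nonneg G A A) zero_le_two

lemma ein_empty : ein G ∅ = 0 := by simp [ein, ecut]

lemma ein_mono {A B : Finset V} (h : A ⊆ B) : ein G A ≤ ein G B :=
  div_le_div_of_nonneg_right (ecut_mono G h h) zero_le_two

lemma ein_union {S T : Finset V} (h : Disjoint S T) :
    ein G (S ∪ T) = ein G S + ein G T + ecut G S T := by
  simp only [ein, ecut_union_left G h, ecut_union_right G _ h, ecut_comm G T S]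
  ring

variable [Fintype V]

lemma gvol_eq_ecut_univ (A : Finset V) : gvol G A = ecut G A univ := by
  rw [ecut_eq_sum]
  refine sum_congr rfl fun v _ => ?_
  rw [← G.card_neighborFinset_eq_degree, G.neighborFinset_eq_filter, card_filter, Nat.cast_sum]
  push_cast
  rfl

lemma gvol_eq_two_mul_ein_add_ecut_compl (A : Finset V) :
    gvol G A = 2 * ein G A + ecut G A Aᶜ := by
  rw [gvol_eq_ecut_univ, ← union_compl A, ecut_union_right G A disjoint_compl_right, ein]
  ring

lemma gvol_compl_eq_two_mul_ein_add_ecut (A : Finset V) :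
    gvol G Aᶜ = 2 * ein G Aᶜ + ecut G A Aᶜ := by
  rw [gvol_eq_ecut_univ, ← union_compl A, ecut_union_right G Aᶜ disjoint_compl_right, ein,
    ecut_comm G Aᶜ A]
  ring

lemma gvol_univ : gvol G univ = 2 * edgecount G := by
  rw [gvol, edgecount, ← Nat.cast_sum, G.sum_degrees_eq_twice_card_edges]
  push_cast
  rfl

lemma ein_univ : ein G univ = edgecount G := by
  rw [ein, ← gvol_eq_ecut_univ, gvol_univ]
  ring

end EdgeCounts

section SparseCut

lemma exists_sparse_cut_of_conduct_lt {W : Type*} [Fintype W] [Nontrivial W] (H : SimpleGraph W)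
    {δ : ℝ} (hc : conduct H < δ) :
    ∃ A B : Finset W, A.Nonempty ∧ B.Nonempty ∧ IsCompl A B ∧
      ecut H A B ≤ δ * min (2 * ein H A + ecut H A B) (2 * ein H B + ecut H A B) := by
  obtain ⟨u, v, huv⟩ := exists_pair_ne W
  have hu : ({u} : Finset W) ≠ univ := fun h => huv (mem_singleton.mp (h ▸ mem_univ v)).symm
  -- two vertices make the infimum defining `conduct H` range over a nonempty set (`sInf ∅ = 0`)
  obtain ⟨_, ⟨A, hA, hAu, rfl⟩, hlt⟩ :=
    exists_lt_of_csInf_lt ⟨_, by exact ⟨{u}, singleton_nonempty u, hu, rfl⟩⟩ hc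
  refine ⟨A, Aᶜ, hA, (compl_ne_univ_iff_nonempty Aᶜ).mp (by rwa [compl_compl]), isCompl_compl, ?_⟩
  rw [gvol_eq_two_mul_ein_add_ecut_compl, gvol_compl_eq_two_mul_ein_add_ecut] at hlt
  have hle : ecut H A Aᶜ ≤ min (2 * ein H A + ecut H A Aᶜ) (2 * ein H Aᶜ + ecut H A Aᶜ) :=
    le_min (by linarith [ein_nonneg H A]) (by linarith [ein_nonneg H Aᶜ])
  rcases ((ecut_nonneg H A Aᶜ).trans hle).lt_or_eq with hpos | hzero
  · exact ((div_lt_iff₀ hpos).mp hlt).le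
  · simpa [← hzero] using hle

variable {V : Type*} (G : SimpleGraph V)

lemma exists_adj_of_ein_pos {U : Finset V} (hU : 0 < ein G U) : ∃ u ∈ U, ∃ v ∈ U, G.Adj u v := by
  have hcard : 0 < #((U ×ˢ U).filter fun p => G.Adj p.1 p.2) := by
    have : (0 : ℝ) < ecut G U U := by rw [ein] at hU; linarith
    rw [ecut] at this
    exact_mod_cast this
  obtain ⟨⟨u, v⟩, huv⟩ := card_pos.mp hcard
  simp only [mem_filter, mem_product] at huv
  exact ⟨u, huv.1.1, v, huv.1.2, huv.2⟩

lemma ecut_induce (U : Finset V) (A B : Finset (U : Set V)) :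
    ecut (G.induce (U : Set V)) A B
      = ecut G (A.map (Function.Embedding.subtype _)) (B.map (Function.Embedding.subtype _)) := by
  simp only [ecut_eq_sum, sum_map]
  rfl

lemma exists_sparse_split_of_conduct_induce_lt [Fintype V] {U : Finset V} {δ : ℝ}
    (hU : 0 < ein G U) (hc : conduct (G.induce (U : Set V)) < δ) :
    ∃ S T : Finset V, S.Nonempty ∧ T.Nonempty ∧ Disjoint S T ∧ S ∪ T = U ∧
      ecut G S T ≤ δ * min (2 * ein G S + ecut G S T) (2 * ein G T + ecut G S T) := by
  obtain ⟨u, hu, v, hv, huv⟩ := exists_adj_of_ein_pos G hU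
  have : Nontrivial (U : Set V) :=
    nontrivial_of_ne ⟨u, hu⟩ ⟨v, hv⟩ fun h => G.ne_of_adj huv (congrArg Subtype.val h)
  obtain ⟨A, B, hA, hB, hAB, hcut⟩ := exists_sparse_cut_of_conduct_lt _ hc
  refine ⟨A.map (Function.Embedding.subtype _), B.map (Function.Embedding.subtype _), hA.map,
    hB.map, (disjoint_map _).mpr hAB.disjoint, ?_, ?_⟩
  · have hunion : A ∪ B = univ := hAB.sup_eq_top
    rw [← map_union, hunion]
    ext x
    simp
  · simpa only [ein, ecut_induce] using hcut

end SparseCut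

section CutBudget

/-- Splitting off a `δ`-sparse cut costs at most slope `2δ/(1+δ)` per internal edge while the
smaller side is still above the threshold `M`, and a final `δ M` once both sides are below it. -/
def cutBudget (δ M m : ℝ) : ℝ :=
  if m ≤ M then 0 else 2 * δ / (1 + δ) * (m - M) + δ * M

variable {δ M : ℝ}

lemma cutBudget_split_of_le (hδ0 : 0 ≤ δ) (hδ1 : δ ≤ 1) {a b c : ℝ} (hc : 0 ≤ c) (hab : a ≤ b)
    (hm : a + b + c ≤ 2 * M) (hMm : M < a + b + c) (hcut : c ≤ δ * (2 * a + c)) :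
    c + cutBudget δ M a + cutBudget δ M b ≤ cutBudget δ M (a + b + c) := by
  set s := 2 * δ / (1 + δ) with hs
  have hs_mul : s * (1 + δ) = 2 * δ := div_mul_cancel₀ _ (by positivity)
  have hδs : δ ≤ s := by rw [hs, le_div_iff₀ (by positivity)]; nlinarith
  have haM : a ≤ M := by linarith
  simp only [cutBudget, if_pos haM, if_neg hMm.not_ge, ← hs]
  by_cases hbM : b ≤ M
  · simp only [if_pos hbM]
    nlinarith [mul_le_mul_of_nonneg_left hab hδ0]
  · simp only [if_neg hbM]
    nlinarith

lemma cutBudget_split (hδ0 : 0 ≤ δ) (hδ1 : δ ≤ 1) {a b c : ℝ} (hc : 0 ≤ c)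
    (hm : a + b + c ≤ 2 * M) (hMm : M < a + b + c)
    (hcut : c ≤ δ * min (2 * a + c) (2 * b + c)) :
    c + cutBudget δ M a + cutBudget δ M b ≤ cutBudget δ M (a + b + c) := by
  rcases le_total a b with hab | hba
  · exact cutBudget_split_of_le hδ0 hδ1 hc hab hm hMm (hcut.trans (by gcongr; exact min_le_left ..))
  · have := cutBudget_split_of_le (M := M) hδ0 hδ1 hc hba (by linarith) (by linarith)
      (hcut.trans (by gcongr; exact min_le_right ..))
    rw [add_comm b a] at this
    linarith

lemma cutBudget_le (hδ0 : 0 ≤ δ) (hδ1 : δ ≤ 1) {m : ℝ} (hm0 : 0 ≤ m) (hm : m ≤ 2 * M) :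
    cutBudget δ M m ≤ δ / (1 + δ) * ((3 + δ) / 2) * m := by
  rw [cutBudget]
  split_ifs with hmM
  · positivity
  · have hgap : δ / (1 + δ) * ((3 + δ) / 2) * m - (2 * δ / (1 + δ) * (m - M) + δ * M)
        = δ * (1 - δ) * (M - m / 2) / (1 + δ) := by
      field_simp
      ring
    rw [← sub_nonneg, hgap]
    exact div_nonneg (mul_nonneg (mul_nonneg hδ0 (by linarith)) (by linarith)) (by linarith)

end CutBudget

section Decomposition

variable {V : Type*} [Fintype V] (G : SimpleGraph V) {δ M : ℝ}

lemma exists_finpartition_ein_le_of_conduct_lt (hδ0 : 0 ≤ δ) (hδ1 : δ ≤ 1)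
    (hexp : ∀ U : Finset V, M < ein G U → conduct (G.induce (U : Set V)) < δ)
    (A : Finset V) (hA : ein G A ≤ 2 * M) :
    ∃ P : Finpartition A, (∀ B ∈ P.parts, ein G B ≤ M) ∧
      ein G A - ∑ B ∈ P.parts, ein G B ≤ cutBudget δ M (ein G A) := by
  induction A using Finset.strongInduction with
  | H A ih =>
  by_cases hAM : ein G A ≤ M
  · refine ⟨⊤, fun B hB => ?_, ?_⟩
    · rwa [mem_singleton.mp (Finpartition.parts_top_subset A hB)]
    · rw [Finpartition.sum_top_parts _ (ein_empty G), sub_self, cutBudget, if_pos hAM]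
  · rw [not_le] at hAM
    obtain ⟨S, T, hS, hT, hST, rfl, hcut⟩ := exists_sparse_split_of_conduct_induce_lt G
      (by linarith [ein_nonneg G A]) (hexp _ hAM)
    obtain ⟨P, hP, hPloss⟩ := ih S (left_lt_sup.mpr fun h => hT.ne_empty (hST.symm.eq_bot_of_le h))
      ((ein_mono G subset_union_left).trans hA)
    obtain ⟨Q, hQ, hQloss⟩ := ih T (right_lt_sup.mpr fun h => hS.ne_empty (hST.eq_bot_of_le h))
      ((ein_mono G subset_union_right).trans hA)
    refine ⟨P.disjUnion Q hST, fun B hB => (mem_union.mp hB).elim (hP B) (hQ B), ?_⟩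
    rw [Finpartition.sum_disjUnion_parts]
    rw [ein_union G hST] at hA hAM ⊢
    linarith [cutBudget_split hδ0 hδ1 (ecut_nonneg G S T) hA hAM hcut]

end Decomposition

theorem stmt7_general {V : Type*} [Fintype V] (G : SimpleGraph V) (e₀ δ : ℝ)
    (hδ0 : 0 < δ) (hδ1 : δ < 1)
    (hexp : ∀ U : Finset V, e₀ < ein G U → conduct (G.induce (U : Set V)) < δ) :
    ∃ P : Finpartition (univ : Finset V),
      (∀ A ∈ P.parts, ein G A ≤ max (edgecount G / 2) e₀) ∧
      edgecount G - ∑ A ∈ P.parts, ein G A ≤ δ / (1 + δ) * ((3 + δ) / 2) * edgecount G := by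
  set M := max (edgecount G / 2) e₀
  have hM : ein G univ ≤ 2 * M := by
    rw [ein_univ]
    linarith [le_max_left (edgecount G / 2) e₀]
  obtain ⟨P, hP, hloss⟩ := exists_finpartition_ein_le_of_conduct_lt G hδ0.le hδ1.le
    (fun U hU => hexp U ((le_max_right _ _).trans_lt hU)) univ hM
  refine ⟨P, hP, ?_⟩
  rw [← ein_univ]
  exact hloss.trans (cutBudget_le hδ0.le hδ1.le (ein_nonneg G univ) hM)

/-- If every vertex set `U` with `e_G(U) > e₀` induces a subgraph that is not a
`δ`-expander, then there is a vertex partition `𝒜` with all parts having at most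
`max{e(G)/2, e₀}` internal edges and with at most `(δ/(1+δ))·((3+δ)/2)·e(G)` edges between
distinct parts. -/
theorem stmt7 {V : Type*} [Fintype V] (G : SimpleGraph V) (e₀ δ : ℝ)
    (he₀ : 0 < e₀) (hδ0 : 0 < δ) (hδ1 : δ < 1)
    (hexp : ∀ U : Finset V, e₀ < ein G U → conduct (G.induce (U : Set V)) < δ) :
    ∃ P : Finpartition (univ : Finset V),
      (∀ A ∈ P.parts, ein G A ≤ max (edgecount G / 2) e₀) ∧
      edgecount G - ∑ A ∈ P.parts, ein G A ≤ δ / (1 + δ) * ((3 + δ) / 2) * edgecount G :=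
  stmt7_general G e₀ δ hδ0 hδ1 hexp
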